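/- In the circuit F* constructed from a type-respecting simplified clique decomposition of a circuit F, every directed path between two original gates whose internal vertices contain no original gates contains exactly one adjacency wire. -/

import Mathlib

/-- A simplified clique decomposition (scd), presented as the term generating
the final labeled graph: leaves introduce single vertices with a singleton
label, binary nodes take disjoint unions, and unary nodes add a new vertex,
unite two labels, or add all edges (arcs) between two labels. -/
inductive SCD (V : Type) where
  | leaf (v : V) : SCD V
  | union (l r : SCD V) : SCD V
  | addVertex (t : SCD V) (v : V) : SCD V
  | unite (t : SCD V) (S₁ S₂ : Finset V) : SCD V
  | addAdj (t : SCD V) (S₁ S₂ : Finset V) : SCD V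

variable {V : Type} [DecidableEq V]

/-- The vertex set of the labeled graph produced by an scd. -/
def SCD.verts : SCD V → Finset V
  | .leaf v => {v}
  | .union l r => l.verts ∪ r.verts
  | .addVertex t v => t.verts ∪ {v}
  | .unite t _ _ => t.verts
  | .addAdj t _ _ => t.verts

/-- The set of labels (the partition of the vertices) of the graph produced. -/
def SCD.labels : SCD V → Finset (Finset V)
  | .leaf v => {{v}}
  | .union l r => l.labels ∪ r.labels
  | .addVertex t v => t.labels ∪ {{v}}
  | .unite t S₁ S₂ => (t.labels \ {S₁, S₂}) ∪ {S₁ ∪ S₂}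
  | .addAdj t _ _ => t.labels

/-- Well-formedness of an scd: unions are of vertex-disjoint graphs, added
vertices are new, and the unite/new-adjacency operations are applied to two
distinct existing labels. -/
def SCD.WF : SCD V → Prop
  | .leaf _ => True
  | .union l r => l.WF ∧ r.WF ∧ Disjoint l.verts r.verts
  | .addVertex t v => t.WF ∧ v ∉ t.verts
  | .unite t S₁ S₂ => t.WF ∧ S₁ ∈ t.labels ∧ S₂ ∈ t.labels ∧ S₁ ≠ S₂
  | .addAdj t S₁ S₂ => t.WF ∧ S₁ ∈ t.labels ∧ S₂ ∈ t.labels ∧ S₁ ≠ S₂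

/-- The set 𝐒(T,𝐆) of all labels appearing at any node of the decomposition. -/
def SCD.allLabels : SCD V → Finset (Finset V)
  | .leaf v => {{v}}
  | .union l r => l.allLabels ∪ r.allLabels
  | .addVertex t v => t.allLabels ∪ {{v}}
  | .unite t S₁ S₂ => t.allLabels ∪ {S₁ ∪ S₂}
  | .addAdj t _ _ => t.allLabels

/-- `T.isChild S₁ S₂`: the label `S₂` was created by uniting `S₁` with another
label somewhere in the decomposition (so `S₁` is a child of `S₂`). -/
def SCD.isChild : SCD V → Finset V → Finset V → Prop
  | .leaf _ => fun _ _ => False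
  | .union l r => fun A B => l.isChild A B ∨ r.isChild A B
  | .addVertex t _ => t.isChild
  | .unite t S₁ S₂ => fun A B => t.isChild A B ∨ ((A = S₁ ∨ A = S₂) ∧ B = S₁ ∪ S₂)
  | .addAdj t _ _ => t.isChild

/-- `T.isAdjArc S₁ S₂`: the new-adjacency operation was applied somewhere in the
decomposition, introducing all arcs from the label `S₁` to the label `S₂`. -/
def SCD.isAdjArc : SCD V → Finset V → Finset V → Prop
  | .leaf _ => fun _ _ => False
  | .union l r => fun A B => l.isAdjArc A B ∨ r.isAdjArc A B
  | .addVertex t _ => t.isAdjArc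
  | .unite t _ _ => t.isAdjArc
  | .addAdj t S₁ S₂ => fun A B => t.isAdjArc A B ∨ (A = S₁ ∧ B = S₂)

/-- The three kinds of gates associated with a label of the decomposition. -/
inductive GK where
  | oand : GK
  | oor : GK
  | inn : GK
deriving DecidableEq

/-- Gates of the circuit `F*` are pairs (label, kind); for a singleton label
the three gates coincide with the original gate, canonically represented with
kind `oand`. -/
def canon (p : Finset V × GK) : Finset V × GK :=
  if p.1.card = 1 then (p.1, GK.oand) else p

/-- An original gate of `F*`: the gate corresponding to a singleton label. -/
def OriginalGate (T : SCD V) (g : Finset V × GK) : Prop :=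
  ∃ v : V, ({v} : Finset V) ∈ T.allLabels ∧ g = ({v}, GK.oand)

/-- The three kinds of wires of `F*`. -/
inductive WKind where
  | cp : WKind   -- child-parent wire
  | pc : WKind   -- parent-child wire
  | adj : WKind  -- adjacency wire
deriving DecidableEq

/-- The wires of `F*`: child-parent wires from `oand`/`oor` of a child label to
that of its parent; parent-child wires from `in` of a parent label to `in` of a
child label; and, for each adjacency arc from `S₁` to `S₂`, an adjacency wire
from `oand(S₁)` or `oor(S₁)` (as chosen by `sel`) to `in(S₂)`. -/
def wire (T : SCD V) (sel : Finset V → Finset V → GK) :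
    WKind → Finset V × GK → Finset V × GK → Prop
  | .cp, g₁, g₂ => ∃ (S₁ S₂ : Finset V) (k : GK),
      (k = GK.oand ∨ k = GK.oor) ∧ T.isChild S₁ S₂ ∧
      g₁ = canon (S₁, k) ∧ g₂ = canon (S₂, k)
  | .pc, g₁, g₂ => ∃ S₁ S₂ : Finset V, T.isChild S₁ S₂ ∧
      g₁ = canon (S₂, GK.inn) ∧ g₂ = canon (S₁, GK.inn)
  | .adj, g₁, g₂ => ∃ S₁ S₂ : Finset V, T.isAdjArc S₁ S₂ ∧
      g₁ = canon (S₁, sel S₁ S₂) ∧ g₂ = canon (S₂, GK.inn)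

/-- `IsWalk step gs ws`: `gs` is a walk in the DAG of `F*` whose consecutive
gates are connected by wires of the kinds listed in `ws`. -/
def IsWalk {α : Type} (step : WKind → α → α → Prop) : List α → List WKind → Prop
  | [_], [] => True
  | a :: b :: rest, w :: ws => step w a b ∧ IsWalk step (b :: rest) ws
  | _, _ => False

/-!
Call a gate of `F*` an in-gate if its kind is `inn`; original gates are represented with kind
`oand` and so are not in-gates. Child-parent wires run between non-in-gates and never end at an
original gate (a parent label has at least two elements), parent-child wires start at in-gates,
and adjacency wires start at non-in-gates; the last two end at in-gates or original gates. Hence a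
path leaving an original gate climbs through non-in-gates, crosses to the in-gates by an adjacency
wire, and cannot cross back, so it reaches the next original gate after exactly one adjacency wire.
-/

theorem IsWalk.count_adj_eq {α : Type} {step : WKind → α → α → Prop} {IsIn IsOrig : α → Prop}
    [DecidablePred IsIn]
    (hcp : ∀ a b, step .cp a b → ¬ IsIn a ∧ ¬ IsIn b ∧ ¬ IsOrig b)
    (hpc : ∀ a b, step .pc a b → IsIn a ∧ (IsOrig b ∨ IsIn b))
    (hadj : ∀ a b, step .adj a b → ¬ IsIn a ∧ (IsOrig b ∨ IsIn b))
    {a b : α} {mid : List α} {ws : List WKind} (hwalk : IsWalk step (a :: (mid ++ [b])) ws)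
    (hb : IsOrig b) (hmid : ∀ x ∈ mid, ¬ IsOrig x) :
    ws.count .adj = if IsIn a then 0 else 1 := by
  induction mid generalizing a ws with
  | nil =>
    obtain _ | ⟨w, _ | ⟨_, _⟩⟩ := ws <;>
      simp only [List.nil_append, IsWalk, and_false] at hwalk
    cases w with
    | cp => exact absurd hb (hcp a b hwalk.1).2.2
    | pc => simp [(hpc a b hwalk.1).1]
    | adj => simp [(hadj a b hwalk.1).1]
  | cons c mid ih =>
    obtain _ | ⟨w, ws⟩ := ws <;> simp only [List.cons_append, IsWalk] at hwalk
    have hc : ¬ IsOrig c := hmid c List.mem_cons_self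
    have ih := ih hwalk.2 fun x hx => hmid x (List.mem_cons_of_mem c hx)
    cases w with
    | cp =>
      obtain ⟨ha, hc', -⟩ := hcp a c hwalk.1
      simp [ha, hc', ih]
    | pc =>
      obtain ⟨ha, hc'⟩ := hpc a c hwalk.1
      simp [ha, hc'.resolve_left hc, ih]
    | adj =>
      obtain ⟨ha, hc'⟩ := hadj a c hwalk.1
      simp [ha, hc'.resolve_left hc, ih]

theorem Finset.one_lt_card_union_of_ne {α : Type*} [DecidableEq α] {s t : Finset α}
    (hs : s.Nonempty) (ht : t.Nonempty) (hst : s ≠ t) : 1 < (s ∪ t).card := by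
  by_contra! h
  obtain ⟨x, hx⟩ := hs
  have hsub : s ∪ t ⊆ {x} := fun y hy =>
    Finset.mem_singleton.mpr (Finset.card_le_one.mp h y hy x (Finset.mem_union_left t hx))
  have hs' : s = {x} :=
    (Finset.subset_union_left.trans hsub).antisymm (Finset.singleton_subset_iff.mpr hx)
  exact hst (hs'.trans (ht.subset_singleton_iff.mp (Finset.subset_union_right.trans hsub)).symm)

namespace SCD

theorem labels_subset_allLabels (T : SCD V) : T.labels ⊆ T.allLabels := by
  induction T with
  | leaf v => simp [labels, allLabels]
  | union l r ihl ihr => exact Finset.union_subset_union ihl ihr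
  | addVertex t v ih => exact Finset.union_subset_union ih le_rfl
  | unite t S₁ S₂ ih => exact Finset.union_subset_union (Finset.sdiff_subset.trans ih) le_rfl
  | addAdj t S₁ S₂ ih => exact ih

theorem nonempty_of_mem_labels {T : SCD V} (hWF : T.WF) {S : Finset V} (hS : S ∈ T.labels) :
    S.Nonempty := by
  induction T generalizing S with
  | leaf v =>
    rw [labels, Finset.mem_singleton] at hS
    exact hS ▸ Finset.singleton_nonempty v
  | union l r ihl ihr =>
    rcases Finset.mem_union.mp hS with h | h
    exacts [ihl hWF.1 h, ihr hWF.2.1 h]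
  | addVertex t v ih =>
    rcases Finset.mem_union.mp hS with h | h
    · exact ih hWF.1 h
    · exact Finset.mem_singleton.mp h ▸ Finset.singleton_nonempty v
  | unite t S₁ S₂ ih =>
    rcases Finset.mem_union.mp hS with h | h
    · exact ih hWF.1 (Finset.mem_sdiff.mp h).1
    · exact Finset.mem_singleton.mp h ▸ (ih hWF.1 hWF.2.1).mono Finset.subset_union_left
  | addAdj t S₁ S₂ ih => exact ih hWF.1 hS

theorem mem_allLabels_of_isChild {T : SCD V} (hWF : T.WF) {A B : Finset V}
    (h : T.isChild A B) : A ∈ T.allLabels := by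
  induction T with
  | leaf v => exact h.elim
  | union l r ihl ihr =>
    rcases h with h | h
    · exact Finset.mem_union_left _ (ihl hWF.1 h)
    · exact Finset.mem_union_right _ (ihr hWF.2.1 h)
  | addVertex t v ih => exact Finset.mem_union_left _ (ih hWF.1 h)
  | unite t S₁ S₂ ih =>
    rcases h with h | ⟨rfl | rfl, -⟩
    · exact Finset.mem_union_left _ (ih hWF.1 h)
    · exact Finset.mem_union_left _ (labels_subset_allLabels t hWF.2.1)
    · exact Finset.mem_union_left _ (labels_subset_allLabels t hWF.2.2.1)
  | addAdj t S₁ S₂ ih => exact ih hWF.1 h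

theorem one_lt_card_of_isChild {T : SCD V} (hWF : T.WF) {A B : Finset V}
    (h : T.isChild A B) : 1 < B.card := by
  induction T with
  | leaf v => exact h.elim
  | union l r ihl ihr => exact h.elim (ihl hWF.1) (ihr hWF.2.1)
  | addVertex t v ih => exact ih hWF.1 h
  | unite t S₁ S₂ ih =>
    obtain ⟨ht, hS₁, hS₂, hne⟩ := hWF
    rcases h with h | ⟨-, rfl⟩
    · exact ih ht h
    · exact Finset.one_lt_card_union_of_ne (nonempty_of_mem_labels ht hS₁)
        (nonempty_of_mem_labels ht hS₂) hne
  | addAdj t S₁ S₂ ih => exact ih hWF.1 h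

theorem mem_allLabels_of_isAdjArc {T : SCD V} (hWF : T.WF) {A B : Finset V}
    (h : T.isAdjArc A B) : B ∈ T.allLabels := by
  induction T with
  | leaf v => exact h.elim
  | union l r ihl ihr =>
    rcases h with h | h
    · exact Finset.mem_union_left _ (ihl hWF.1 h)
    · exact Finset.mem_union_right _ (ihr hWF.2.1 h)
  | addVertex t v ih => exact Finset.mem_union_left _ (ih hWF.1 h)
  | unite t S₁ S₂ ih => exact Finset.mem_union_left _ (ih hWF.1 h)
  | addAdj t S₁ S₂ ih =>
    rcases h with h | ⟨_, rfl⟩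
    · exact ih hWF.1 h
    · exact labels_subset_allLabels t hWF.2.2.1

end SCD

omit [DecidableEq V] in
theorem canon_of_card_ne_one {S : Finset V} (h : S.card ≠ 1) (k : GK) : canon (S, k) = (S, k) :=
  if_neg h

omit [DecidableEq V] in
theorem canon_snd_ne_inn (S : Finset V) {k : GK} (hk : k ≠ GK.inn) :
    (canon (S, k)).2 ≠ GK.inn := by
  unfold canon
  split_ifs <;> simp [hk]

theorem not_originalGate_canon (T : SCD V) {S : Finset V} (hS : 1 < S.card) (k : GK) :
    ¬ OriginalGate T (canon (S, k)) := by
  rintro ⟨v, -, hv⟩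
  rw [canon_of_card_ne_one hS.ne'] at hv
  obtain ⟨rfl, -⟩ := Prod.mk.inj hv
  simp at hS

theorem originalGate_canon_inn_or_snd_eq_inn (T : SCD V) {S : Finset V} (hS : S ∈ T.allLabels) :
    OriginalGate T (canon (S, GK.inn)) ∨ (canon (S, GK.inn)).2 = GK.inn := by
  by_cases h : S.card = 1
  · obtain ⟨v, rfl⟩ := Finset.card_eq_one.mp h
    exact .inl ⟨v, hS, if_pos h⟩
  · exact .inr (by rw [canon_of_card_ne_one h])

section wire

variable {T : SCD V} {sel : Finset V → Finset V → GK} {a b : Finset V × GK}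

theorem wire_cp_spec (hWF : T.WF) (h : wire T sel .cp a b) :
    a.2 ≠ GK.inn ∧ b.2 ≠ GK.inn ∧ ¬ OriginalGate T b := by
  obtain ⟨S₁, S₂, k, hk, hch, rfl, rfl⟩ := h
  have hk' : k ≠ GK.inn := by rcases hk with rfl | rfl <;> decide
  exact ⟨canon_snd_ne_inn S₁ hk', canon_snd_ne_inn S₂ hk',
    not_originalGate_canon T (SCD.one_lt_card_of_isChild hWF hch) k⟩

theorem wire_pc_spec (hWF : T.WF) (h : wire T sel .pc a b) :
    a.2 = GK.inn ∧ (OriginalGate T b ∨ b.2 = GK.inn) := by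
  obtain ⟨S₁, S₂, hch, rfl, rfl⟩ := h
  exact ⟨by rw [canon_of_card_ne_one (SCD.one_lt_card_of_isChild hWF hch).ne'],
    originalGate_canon_inn_or_snd_eq_inn T (SCD.mem_allLabels_of_isChild hWF hch)⟩

theorem wire_adj_spec (hWF : T.WF) (hsel : ∀ A B, sel A B ≠ GK.inn) (h : wire T sel .adj a b) :
    a.2 ≠ GK.inn ∧ (OriginalGate T b ∨ b.2 = GK.inn) := by
  obtain ⟨S₁, S₂, hadj, rfl, rfl⟩ := h
  exact ⟨canon_snd_ne_inn S₁ (hsel S₁ S₂),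
    originalGate_canon_inn_or_snd_eq_inn T (SCD.mem_allLabels_of_isAdjArc hWF hadj)⟩

end wire

/-- Every directed path of `F*` between two original gates whose internal
vertices contain no original gates contains exactly one adjacency wire. -/
theorem fstar_connecting_path (T : SCD V) (hWF : T.WF)
    (sel : Finset V → Finset V → GK) (hsel : ∀ A B, sel A B ≠ GK.inn)
    (g₁ g₂ : Finset V × GK) (mid : List (Finset V × GK)) (ws : List WKind)
    (hwalk : IsWalk (wire T sel) (g₁ :: (mid ++ [g₂])) ws)
    (h₁ : OriginalGate T g₁) (h₂ : OriginalGate T g₂)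
    (hmid : ∀ g ∈ mid, ¬ OriginalGate T g) :
    ws.count WKind.adj = 1 := by
  obtain ⟨v, -, rfl⟩ := h₁
  have hcount := IsWalk.count_adj_eq (IsIn := fun g => g.2 = GK.inn)
    (fun _ _ h => wire_cp_spec hWF h) (fun _ _ h => wire_pc_spec hWF h)
    (fun _ _ h => wire_adj_spec hWF hsel h) hwalk h₂ hmid
  simpa using hcount
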